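/- Let ω be a nonempty open subset of ℝ whose closure is contained in the open interval (0,1). Then there exists a function η₀ : ℝ → ℝ which is twice continuously differentiable on [0,1], satisfies η₀(x) > 0 for all x ∈ (0,1), η₀(0) = η₀(1) = 0, and whose derivative satisfies |η₀'(x)| > 0 for every x ∈ [0,1] \ ω. -/

import Mathlib

/-!
For `a ∈ ω`, take `η₀ x = x (1 - x) e^{L x}` with `L = (2a - 1) / (a (1 - a))`. It vanishes at
`0` and `1` and is positive in between, and its derivative
`e^{L x} (1 - 2x + L x (1 - x)) = e^{L x} (a - x) (a x + (1 - a)(1 - x)) / (a (1 - a))`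
vanishes on `[0, 1]` only at `a`, which lies in `ω`.
-/

open Set Real

noncomputable section

def expWeight (L x : ℝ) : ℝ := x * (1 - x) * exp (L * x)

def expWeightRate (a : ℝ) : ℝ := (2 * a - 1) / (a * (1 - a))

theorem contDiff_expWeight (L : ℝ) {n : WithTop ℕ∞} : ContDiff ℝ n (expWeight L) := by
  unfold expWeight
  fun_prop

@[simp] theorem expWeight_zero (L : ℝ) : expWeight L 0 = 0 := by simp [expWeight]

@[simp] theorem expWeight_one (L : ℝ) : expWeight L 1 = 0 := by simp [expWeight]

theorem expWeight_pos (L : ℝ) {x : ℝ} (hx : x ∈ Ioo (0 : ℝ) 1) : 0 < expWeight L x := by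
  have h1 : 0 < 1 - x := sub_pos.2 hx.2
  have h0 := hx.1
  unfold expWeight
  positivity

theorem hasDerivAt_expWeight (L x : ℝ) :
    HasDerivAt (expWeight L) (exp (L * x) * (1 - 2 * x + L * (x * (1 - x)))) x := by
  have hpoly : HasDerivAt (fun y : ℝ => y * (1 - y)) (1 - 2 * x) x :=
    ((hasDerivAt_id' x).mul ((hasDerivAt_id' x).const_sub 1)).congr_deriv (by ring)
  have hexp : HasDerivAt (fun y => exp (L * y)) (exp (L * x) * L) x :=
    ((hasDerivAt_id x).const_mul L).exp.congr_deriv (by simp)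
  exact (hpoly.mul hexp).congr_deriv (by ring)

theorem expWeightRate_factor {a : ℝ} (ha : a ∈ Ioo (0 : ℝ) 1) (x : ℝ) :
    1 - 2 * x + expWeightRate a * (x * (1 - x)) =
      (a - x) * (a * x + (1 - a) * (1 - x)) / (a * (1 - a)) := by
  have ha0 : a ≠ 0 := ha.1.ne'
  have ha1 : 1 - a ≠ 0 := (sub_pos.2 ha.2).ne'
  unfold expWeightRate
  field_simp
  ring

theorem deriv_expWeight_ne_zero {a x : ℝ} (ha : a ∈ Ioo (0 : ℝ) 1) (hx : x ∈ Icc (0 : ℝ) 1)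
    (hxa : x ≠ a) : deriv (expWeight (expWeightRate a)) x ≠ 0 := by
  have h1a : 0 < 1 - a := sub_pos.2 ha.2
  have hconvex : 0 < a * x + (1 - a) * (1 - x) := by
    rcases hx.1.eq_or_lt with rfl | hx0
    · simpa using h1a
    · nlinarith [mul_pos ha.1 hx0, mul_nonneg h1a.le (sub_nonneg.2 hx.2)]
  rw [(hasDerivAt_expWeight _ x).deriv, expWeightRate_factor ha]
  have ha0 := ha.1
  exact mul_ne_zero (exp_pos _).ne' <|
    div_ne_zero (mul_ne_zero (sub_ne_zero.2 hxa.symm) hconvex.ne') (by positivity)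

end

theorem fursikov_imanuvilov_weight_general
    (ω : Set ℝ) (hne : ω.Nonempty)
    (hcl : closure ω ⊆ Ioo (0 : ℝ) 1) :
    ∃ η₀ : ℝ → ℝ,
      ContDiffOn ℝ 2 η₀ (Icc (0 : ℝ) 1) ∧
      (∀ x ∈ Ioo (0 : ℝ) 1, 0 < η₀ x) ∧
      η₀ 0 = 0 ∧ η₀ 1 = 0 ∧
      (∀ x ∈ Icc (0 : ℝ) 1 \ ω, 0 < |deriv η₀ x|) := by
  obtain ⟨a, ha⟩ := hne
  have haI : a ∈ Ioo (0 : ℝ) 1 := hcl (subset_closure ha)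
  refine ⟨expWeight (expWeightRate a), (contDiff_expWeight _).contDiffOn,
    fun x hx => expWeight_pos _ hx, expWeight_zero _, expWeight_one _, ?_⟩
  rintro x ⟨hxI, hxω⟩
  exact abs_pos.2 <| deriv_expWeight_ne_zero haI hxI fun hxa => hxω (hxa ▸ ha)

/-- Fursikov–Imanuvilov weight-function lemma (Lemma 2.1 of the paper):
for a nonempty open set ω compactly contained in (0,1), there is a function
η₀, twice continuously differentiable on [0,1], positive on (0,1), vanishing
at 0 and 1, whose derivative does not vanish on [0,1] \ ω. -/
theorem fursikov_imanuvilov_weight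
    (ω : Set ℝ) (hne : ω.Nonempty) (hopen : IsOpen ω)
    (hcl : closure ω ⊆ Ioo (0 : ℝ) 1) :
    ∃ η₀ : ℝ → ℝ,
      ContDiffOn ℝ 2 η₀ (Icc (0 : ℝ) 1) ∧
      (∀ x ∈ Ioo (0 : ℝ) 1, 0 < η₀ x) ∧
      η₀ 0 = 0 ∧ η₀ 1 = 0 ∧
      (∀ x ∈ Icc (0 : ℝ) 1 \ ω, 0 < |deriv η₀ x|) :=
  fursikov_imanuvilov_weight_general ω hne hcl
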